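/- (Inequality (3.3), the key lemma for Theorem 3 of the paper.) Under Assumption 1, the test statistic evaluated at the true parameter satisfies T_n(β) ≤ T*_n(β) pointwise on Ω. -/

import Mathlib

open MeasureTheory ProbabilityTheory

/-- Sample upper moment `m̂_u(b,v)` computed from outcomes `y`. -/
noncomputable def muHatU {n K : ℕ} (X : Fin n → Fin K → ℝ) (b v : Fin K → ℝ)
    (y : Fin n → ℝ) : ℝ :=
  (n : ℝ)⁻¹ * ∑ i, (2 * y i - 1) *
    (if 0 ≤ (∑ j, X i j * b j) ∧ (∑ j, X i j * v j) < 0 then 1 else 0)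

/-- Sample lower moment `m̂_l(b,v)` computed from outcomes `y`. -/
noncomputable def muHatL {n K : ℕ} (X : Fin n → Fin K → ℝ) (b v : Fin K → ℝ)
    (y : Fin n → ℝ) : ℝ :=
  (n : ℝ)⁻¹ * ∑ i, (1 - 2 * y i) *
    (if (∑ j, X i j * b j) ≤ 0 ∧ 0 < (∑ j, X i j * v j) then 1 else 0)

/-- Sample variance `σ̂_u²(b,v)`. -/
noncomputable def sigHatU2 {n K : ℕ} (X : Fin n → Fin K → ℝ) (b v : Fin K → ℝ)
    (y : Fin n → ℝ) : ℝ :=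
  (n : ℝ)⁻¹ * (∑ i, (if 0 ≤ (∑ j, X i j * b j) ∧ (∑ j, X i j * v j) < 0
      then (1:ℝ) else 0)) - (muHatU X b v y) ^ 2

/-- Sample variance `σ̂_l²(b,v)`. -/
noncomputable def sigHatL2 {n K : ℕ} (X : Fin n → Fin K → ℝ) (b v : Fin K → ℝ)
    (y : Fin n → ℝ) : ℝ :=
  (n : ℝ)⁻¹ * (∑ i, (if (∑ j, X i j * b j) ≤ 0 ∧ 0 < (∑ j, X i j * v j)
      then (1:ℝ) else 0)) - (muHatL X b v y) ^ 2

/-- The test statistic `T_n(b)` computed from outcomes `y`. -/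
noncomputable def Tstat {n K : ℕ} (X : Fin n → Fin K → ℝ)
    (Vu Vl : Finset (Fin K → ℝ)) (hu : Vu.Nonempty) (hl : Vl.Nonempty)
    (ε : ℝ) (b : Fin K → ℝ) (y : Fin n → ℝ) : ℝ :=
  max 0 (max
    (Vu.sup' hu fun v =>
      Real.sqrt n * (-(muHatU X b v y)) /
        max (Real.sqrt (sigHatU2 X b v y)) ε)
    (Vl.sup' hl fun v =>
      Real.sqrt n * (-(muHatL X b v y)) /
        max (Real.sqrt (sigHatL2 X b v y)) ε))

/-!
Since `Y_i = 1{X_i β + U_i ≥ 0}` and `Y*_i = 1{U_i ≥ 0}`, we have `Y_i ≥ Y*_i` where `X_i β ≥ 0`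
and `Y_i ≤ Y*_i` where `X_i β ≤ 0`. Hence every moment `m̂_u(β,v)`, `m̂_l(β,v)` computed from `Y`
is at least the one computed from `Y*`. The positive part of a studentized term
`√n · (-m) / max(√(p - m²), ε)` is antitone in `m`: a smaller negative moment has both a larger
numerator and, through `m²`, a smaller variance.
-/

lemma ite_le_ite_of_imp {α : Type*} [Preorder α] {p q : Prop} [Decidable p] [Decidable q]
    {a b : α} (hba : b ≤ a) (hpq : p → q) :
    (if p then a else b) ≤ if q then a else b := by
  split_ifs with hp hq hq
  · exact le_rfl
  · exact absurd (hpq hp) hq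
  · exact hba
  · exact le_rfl

lemma studentized_le_max_zero_of_le {s ε p m m' : ℝ} (hs : 0 ≤ s) (hε : 0 < ε) (hm : m' ≤ m) :
    s * -m / max √(p - m ^ 2) ε ≤ max 0 (s * -m' / max √(p - m' ^ 2) ε) := by
  have hD : 0 < max √(p - m ^ 2) ε := lt_max_of_lt_right hε
  have hD' : 0 < max √(p - m' ^ 2) ε := lt_max_of_lt_right hε
  rcases le_or_gt 0 m with hm0 | hm0
  · exact le_max_of_le_left
      (div_nonpos_of_nonpos_of_nonneg (mul_nonpos_of_nonneg_of_nonpos hs (by linarith)) hD.le)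
  · have hsq : m ^ 2 ≤ m' ^ 2 := by nlinarith
    have hden : max √(p - m' ^ 2) ε ≤ max √(p - m ^ 2) ε :=
      max_le_max_right ε (Real.sqrt_le_sqrt (by linarith))
    have hnum : s * -m ≤ s * -m' := mul_le_mul_of_nonneg_left (by linarith) hs
    exact le_max_of_le_right
      (div_le_div₀ (mul_nonneg hs (by linarith)) hnum hD' hden)

section Moments

variable {n K : ℕ} (X : Fin n → Fin K → ℝ) (b v : Fin K → ℝ) {y y' : Fin n → ℝ}

lemma muHatU_le_muHatU (h : ∀ i, 0 ≤ ∑ j, X i j * b j → y' i ≤ y i) :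
    muHatU X b v y' ≤ muHatU X b v y := by
  refine mul_le_mul_of_nonneg_left (Finset.sum_le_sum fun i _ => ?_) (by positivity)
  split_ifs with hi
  · linarith [h i hi.1]
  · simp

lemma muHatL_le_muHatL (h : ∀ i, ∑ j, X i j * b j ≤ 0 → y i ≤ y' i) :
    muHatL X b v y' ≤ muHatL X b v y := by
  refine mul_le_mul_of_nonneg_left (Finset.sum_le_sum fun i _ => ?_) (by positivity)
  split_ifs with hi
  · linarith [h i hi.1]
  · simp

end Moments

lemma Tstat_le_Tstat_of_muHat_le {n K : ℕ} (X : Fin n → Fin K → ℝ)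
    (Vu Vl : Finset (Fin K → ℝ)) (hu : Vu.Nonempty) (hl : Vl.Nonempty)
    {ε : ℝ} (hε : 0 < ε) (b : Fin K → ℝ) {y y' : Fin n → ℝ}
    (hU : ∀ v, muHatU X b v y' ≤ muHatU X b v y) (hL : ∀ v, muHatL X b v y' ≤ muHatL X b v y) :
    Tstat X Vu Vl hu hl ε b y ≤ Tstat X Vu Vl hu hl ε b y' := by
  have hs : 0 ≤ √(n : ℝ) := Real.sqrt_nonneg _
  unfold Tstat sigHatU2 sigHatL2
  refine max_le (le_max_left _ _) (max_le (Finset.sup'_le _ _ fun v hv => ?_)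
    (Finset.sup'_le _ _ fun v hv => ?_))
  · refine (studentized_le_max_zero_of_le hs hε (hU v)).trans
      (max_le_max_left 0 (le_max_of_le_left ?_))
    exact Finset.le_sup'_of_le _ hv le_rfl
  · refine (studentized_le_max_zero_of_le hs hε (hL v)).trans
      (max_le_max_left 0 (le_max_of_le_right ?_))
    exact Finset.le_sup'_of_le _ hv le_rfl

theorem Tstat_le_TstatStar_general
    {Ω : Type*}
    {n K : ℕ}
    (X : Fin n → Fin K → ℝ) (β : Fin K → ℝ)
    (U : Fin n → Ω → ℝ)
    (Y : Fin n → Ω → ℝ)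
    (hY : ∀ i ω, Y i ω = if 0 ≤ (∑ j, X i j * β j) + U i ω then 1 else 0)
    (ε : ℝ) (hε : 0 < ε)
    (Vu Vl : Finset (Fin K → ℝ)) (hu : Vu.Nonempty) (hl : Vl.Nonempty)
    (ω : Ω) :
    Tstat X Vu Vl hu hl ε β (fun i => Y i ω) ≤
      Tstat X Vu Vl hu hl ε β (fun i => if 0 ≤ U i ω then 1 else 0) := by
  refine Tstat_le_Tstat_of_muHat_le X Vu Vl hu hl hε β
    (fun v => muHatU_le_muHatU X β v fun i hi => ?_)
    (fun v => muHatL_le_muHatL X β v fun i hi => ?_)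
  · rw [hY]
    exact ite_le_ite_of_imp zero_le_one fun hU => add_nonneg hi hU
  · rw [hY]
    exact ite_le_ite_of_imp zero_le_one fun hYi => by linarith

/-- Inequality (3.3): under Assumption 1, `T_n(β) ≤ T*_n(β)` pointwise on `Ω`. -/
theorem Tstat_le_TstatStar
    {Ω : Type*} [MeasurableSpace Ω] (P : Measure Ω) [IsProbabilityMeasure P]
    {n K : ℕ} (hn : 1 ≤ n) (hK : 1 ≤ K)
    (X : Fin n → Fin K → ℝ) (β : Fin K → ℝ)
    (U : Fin n → Ω → ℝ) (hU : ∀ i, Measurable (U i))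
    (Y : Fin n → Ω → ℝ)
    (hY : ∀ i ω, Y i ω = if 0 ≤ (∑ j, X i j * β j) + U i ω then 1 else 0)
    (hmed : ∀ i, P {ω | 0 ≤ U i ω} = 1/2)
    (hindep : iIndepFun
      (fun i ω => if 0 ≤ U i ω then (1 : ℝ) else 0) P)
    (ε : ℝ) (hε : 0 < ε)
    (Vu Vl : Finset (Fin K → ℝ)) (hu : Vu.Nonempty) (hl : Vl.Nonempty)
    (ω : Ω) :
    Tstat X Vu Vl hu hl ε β (fun i => Y i ω) ≤
      Tstat X Vu Vl hu hl ε β (fun i => if 0 ≤ U i ω then 1 else 0) :=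
  Tstat_le_TstatStar_general X β U Y hY ε hε Vu Vl hu hl ω
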